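/- Let m ≥ 1 be an integer and let T ⊂ ℝ² be the convex hull of three affinely independent points a, b, c ∈ ℤ² such that T contains no lattice point in its interior and the three edges [a,b], [b,c], [c,a] have lattice lengths 1, 1 and m+1 (in some order). Then T is unimodularly equivalent to the triangle conv{(0,0),(m+1,0),(0,1)}. -/

import Mathlib

/-- The inclusion of lattice points `ℤ² ⊆ ℝ²` (coordinatewise coercion). -/
def toReal2 (v : Fin 2 → ℤ) : Fin 2 → ℝ := fun i => (v i : ℝ)

/-- The affine unimodular map `x ↦ A x + b` of `ℝ²` determined by an integer matrix `A`
and an integer vector `b`. -/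
def affineUnimodularMap (A : Matrix (Fin 2) (Fin 2) ℤ) (b : Fin 2 → ℤ) (x : Fin 2 → ℝ) :
    Fin 2 → ℝ :=
  (A.map (Int.cast : ℤ → ℝ)).mulVec x + toReal2 b

/-- The lattice length of the segment joining two points of `ℤ²`: the number of lattice
points on it minus one, i.e. the gcd of the coordinate differences. -/
def latticeLength (p q : Fin 2 → ℤ) : ℕ := Int.gcd (q 0 - p 0) (q 1 - p 1)

/-!
Label the vertices so that `[a, b]` is the long edge. As `[c, a]` is primitive and the triangle
is nondegenerate, a unimodular map sends `c, a, b` to `0, (0, 1), (s, t)` with `s > 0`, and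
primitivity of `[b, c]` gives `gcd s t = 1`. If `s ∤ t - 1`, take `0 ≤ x < s` with
`t x ≡ -1 (mod s)`: then `x ≠ 0, s - 1`, and `(x, (t x + 1) / s)` is an interior lattice point.
Hence `t = 1 + k s`, the long edge has lattice length `gcd s (t - 1) = s`, so `s = m + 1`, and
`(x, y) ↦ (x, 1 + k x - y)` carries the normalized triangle onto the standard one.
-/

open Matrix

section AffineUnimodularMap

variable (A : Matrix (Fin 2) (Fin 2) ℤ) (v : Fin 2 → ℤ)

theorem toReal2_vec2 (x y : ℤ) : toReal2 ![x, y] = ![(x : ℝ), y] := by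
  ext i; fin_cases i <;> rfl

theorem toReal2_zero : toReal2 0 = 0 := funext fun _ => Int.cast_zero

theorem affineUnimodularMap_toReal2 (z : Fin 2 → ℤ) :
    affineUnimodularMap A v (toReal2 z) = toReal2 (A *ᵥ z + v) := by
  ext i
  simp only [affineUnimodularMap, toReal2, Pi.add_apply, mulVec, dotProduct, map_apply]
  push_cast
  rfl

theorem affineUnimodularMap_image_convexHull (s : Set (Fin 2 → ℝ)) :
    affineUnimodularMap A v '' convexHull ℝ s = convexHull ℝ (affineUnimodularMap A v '' s) :=
  ((mulVecLin (A.map (Int.cast : ℤ → ℝ))).toAffineMap +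
    AffineMap.const ℝ (Fin 2 → ℝ) (toReal2 v)).image_convexHull s

theorem affineUnimodularMap_image_triangle (a b c : Fin 2 → ℤ) :
    affineUnimodularMap A v '' convexHull ℝ {toReal2 a, toReal2 b, toReal2 c} =
      convexHull ℝ {toReal2 (A *ᵥ a + v), toReal2 (A *ᵥ b + v), toReal2 (A *ᵥ c + v)} := by
  simp only [affineUnimodularMap_image_convexHull, Set.image_insert_eq, Set.image_singleton,
    affineUnimodularMap_toReal2]

theorem continuous_affineUnimodularMap : Continuous (affineUnimodularMap A v) := by
  unfold affineUnimodularMap; fun_prop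

variable {A}

theorem injective_affineUnimodularMap (hA : IsUnit A.det) :
    Function.Injective (affineUnimodularMap A v) := by
  intro x y h
  refine mulVec_injective_of_det_ne_zero ?_ (add_right_cancel h)
  rw [← Int.cast_det]
  exact_mod_cast hA.ne_zero

theorem exists_toReal2_mem_interior_of_mem_interior_image (hA : IsUnit A.det)
    {S : Set (Fin 2 → ℝ)} {q : Fin 2 → ℤ}
    (hq : toReal2 q ∈ interior (affineUnimodularMap A v '' S)) :
    ∃ p : Fin 2 → ℤ, toReal2 p ∈ interior S := by
  set f := affineUnimodularMap A v with hf
  have hp : f (toReal2 (A⁻¹ *ᵥ (q - v))) = toReal2 q := by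
    rw [hf, affineUnimodularMap_toReal2, mulVec_mulVec, mul_nonsing_inv _ hA, one_mulVec,
      sub_add_cancel]
  have hsub : f ⁻¹' interior (f '' S) ⊆ S :=
    calc f ⁻¹' interior (f '' S) ⊆ f ⁻¹' (f '' S) := Set.preimage_mono interior_subset
      _ = S := Set.preimage_image_eq S (injective_affineUnimodularMap v hA)
  exact ⟨_, interior_maximal hsub (isOpen_interior.preimage (continuous_affineUnimodularMap A v))
    (Set.mem_preimage.mpr (hp ▸ hq))⟩

theorem gcd_dvd_gcd_mulVec (B : Matrix (Fin 2) (Fin 2) ℤ) (z : Fin 2 → ℤ) :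
    Int.gcd (z 0) (z 1) ∣ Int.gcd ((B *ᵥ z) 0) ((B *ᵥ z) 1) := by
  have h (i : Fin 2) : (Int.gcd (z 0) (z 1) : ℤ) ∣ (B *ᵥ z) i := by
    simp only [mulVec, dotProduct, Fin.sum_univ_two]
    exact dvd_add (dvd_mul_of_dvd_right (Int.gcd_dvd_left _ _) _)
      (dvd_mul_of_dvd_right (Int.gcd_dvd_right _ _) _)
  exact Int.natCast_dvd_natCast.mp (Int.dvd_coe_gcd (h 0) (h 1))

theorem gcd_mulVec (hA : IsUnit A.det) (z : Fin 2 → ℤ) :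
    Int.gcd ((A *ᵥ z) 0) ((A *ᵥ z) 1) = Int.gcd (z 0) (z 1) := by
  refine Nat.dvd_antisymm ?_ (gcd_dvd_gcd_mulVec A z)
  have hz : A⁻¹ *ᵥ (A *ᵥ z) = z := by rw [mulVec_mulVec, nonsing_inv_mul _ hA, one_mulVec]
  simpa only [hz] using gcd_dvd_gcd_mulVec A⁻¹ (A *ᵥ z)

theorem latticeLength_mulVec_add (hA : IsUnit A.det) (p q : Fin 2 → ℤ) :
    latticeLength (A *ᵥ p + v) (A *ᵥ q + v) = latticeLength p q := by
  have h := gcd_mulVec hA (q - p)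
  simp only [mulVec_sub, Pi.sub_apply] at h
  simpa [latticeLength, add_sub_add_right_eq_sub] using h

end AffineUnimodularMap

theorem det_sub_ne_zero_of_affineIndependent {K : Type*} [Field K] {p q r : Fin 2 → K}
    (h : AffineIndependent K ![p, q, r]) :
    (p 0 - r 0) * (q 1 - r 1) - (p 1 - r 1) * (q 0 - r 0) ≠ 0 := by
  intro hdet
  obtain ⟨w, hw, hker⟩ := exists_vecMul_eq_zero_iff.mpr
    (show (Matrix.of ![p - r, q - r]).det = 0 by
      rw [det_fin_two]; simpa using hdet)
  have hker' (i : Fin 2) : w 0 * (p i - r i) + w 1 * (q i - r i) = 0 := by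
    simpa [vecMul, dotProduct, Fin.sum_univ_two] using congrFun hker i
  have := (affineIndependent_iff_of_fintype K _).mp h ![w 0, w 1, -(w 0 + w 1)]
    (by simp [Fin.sum_univ_three]) (by
      rw [Finset.weightedVSub_eq_linear_combination _ (by simp [Fin.sum_univ_three])]
      ext i
      simp [Fin.sum_univ_three]
      linear_combination hker' i)
  exact hw (by ext i; fin_cases i; exacts [this 0, this 1])

theorem exists_isUnit_det_mulVec_eq {u w : Fin 2 → ℤ} (hu : Int.gcd (u 0) (u 1) = 1)
    (hdet : u 0 * w 1 - u 1 * w 0 ≠ 0) :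
    ∃ U : Matrix (Fin 2) (Fin 2) ℤ, IsUnit U.det ∧ U *ᵥ u = ![0, 1] ∧
      ∃ s t : ℤ, U *ᵥ w = ![s, t] ∧ 0 < s := by
  obtain ⟨X, Y, hXY⟩ : ∃ X Y : ℤ, u 0 * X + u 1 * Y = 1 :=
    ⟨_, _, by rw [← Int.gcd_eq_gcd_ab, hu]; rfl⟩
  obtain ⟨ε, hε, hpos⟩ : ∃ ε : ℤ, IsUnit ε ∧ 0 < ε * (u 1 * w 0 - u 0 * w 1) := by
    rcases hdet.lt_or_gt with h | h
    · exact ⟨1, isUnit_one, by linarith⟩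
    · exact ⟨-1, isUnit_one.neg, by linarith⟩
  refine ⟨!![ε * u 1, -(ε * u 0); X, Y], ?_, ?_, _, _, (by ext i; fin_cases i <;> rfl), ?_⟩
  · rw [det_fin_two_of]
    convert hε using 1
    linear_combination ε * hXY
  · ext i
    fin_cases i <;> simp [mulVec, dotProduct]
    · ring
    · linear_combination hXY
  · simp
    linear_combination hpos

theorem smul_add_smul_mem_convexHull_insert_zero {E : Type*} [AddCommGroup E] [Module ℝ E] (x y : E)
    {a b : ℝ} (ha : 0 ≤ a) (hb : 0 ≤ b) (hab : a + b ≤ 1) :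
    a • x + b • y ∈ convexHull ℝ {x, y, 0} := by
  have h := (convex_convexHull ℝ ({x, y, 0} : Set E)).sum_mem (t := Finset.univ)
    (w := ![a, b, 1 - a - b]) (z := ![x, y, 0])
    (by intro i _; fin_cases i <;> simp <;> linarith) (by simp [Fin.sum_univ_three])
    (by intro i _; fin_cases i <;> apply subset_convexHull <;> simp)
  simpa [Fin.sum_univ_three] using h

theorem setOf_lt_subset_interior_convexHull {s t : ℝ} (hs : 0 < s) :
    {z : Fin 2 → ℝ | 0 < z 0 ∧ t * z 0 < s * z 1 ∧ s * z 1 < s + (t - 1) * z 0} ⊆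
      interior (convexHull ℝ {![0, 1], ![s, t], 0}) := by
  refine interior_maximal ?_ ?_
  · rintro z ⟨h0, h1, h2⟩
    have hz : z = (z 1 - t * z 0 / s) • ![0, 1] + (z 0 / s) • ![s, t] := by
      ext i; fin_cases i <;> simp <;> field_simp; ring
    rw [hz]
    apply smul_add_smul_mem_convexHull_insert_zero
    · rw [sub_nonneg, div_le_iff₀ hs]; linarith
    · positivity
    · have : z 1 - t * z 0 / s + z 0 / s = (s * z 1 - (t - 1) * z 0) / s := by
        field_simp; ring
      rw [this, div_le_one hs]
      linarith
  · have h0 : Continuous fun z : Fin 2 → ℝ => z 0 := continuous_apply 0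
    have h1 : Continuous fun z : Fin 2 → ℝ => z 1 := continuous_apply 1
    exact (isOpen_lt continuous_const h0).inter ((isOpen_lt (continuous_const.mul h0)
      (continuous_const.mul h1)).inter (isOpen_lt (continuous_const.mul h1)
        (continuous_const.add (continuous_const.mul h0))))

theorem exists_lattice_point_of_not_dvd {s t : ℤ} (hs : 0 < s) (hst : Int.gcd s t = 1)
    (hdvd : ¬ s ∣ t - 1) :
    ∃ x y : ℤ, 0 < x ∧ t * x < s * y ∧ s * y < s + (t - 1) * x := by
  obtain ⟨α, β, hαβ⟩ := Int.isCoprime_iff_gcd_eq_one.mpr hst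
  -- `x := -β mod s` solves `t * x ≡ -1 (mod s)`
  obtain ⟨x, y, hx₀, hxs, hy⟩ : ∃ x y : ℤ, 0 ≤ x ∧ x < s ∧ s * y = t * x + 1 :=
    ⟨-β % s, α - t * (-β / s), Int.emod_nonneg _ hs.ne', Int.emod_lt_of_pos _ hs, by
      linear_combination hαβ - t * Int.emod_add_mul_ediv (-β) s⟩
  have hx_ne_zero : x ≠ 0 := by
    rintro rfl
    exact hdvd ⟨(t - 1) * y, by linear_combination -(t - 1) * hy⟩
  have hx_ne : x ≠ s - 1 := by
    rintro rfl
    exact hdvd ⟨t - y, by linear_combination hy⟩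
  have hx : x + 1 < s := by omega
  exact ⟨x, y, by omega, by linarith, by linear_combination hy + hx⟩

theorem dvd_sub_one_of_forall_not_mem_interior {s t : ℤ} (hs : 0 < s) (hst : Int.gcd s t = 1)
    (hint : ∀ q : Fin 2 → ℤ, toReal2 q ∉ interior (convexHull ℝ {![0, 1], ![(s : ℝ), t], 0})) :
    s ∣ t - 1 := by
  by_contra hdvd
  obtain ⟨x, y, hx, hlo, hhi⟩ := exists_lattice_point_of_not_dvd hs hst hdvd
  refine hint ![x, y] (setOf_lt_subset_interior_convexHull (by exact_mod_cast hs) ?_)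
  have : (0 : ℝ) < x ∧ (t : ℝ) * x < s * y ∧ (s : ℝ) * y < s + (t - 1) * x := by
    exact ⟨by exact_mod_cast hx, by exact_mod_cast hlo, by exact_mod_cast hhi⟩
  simpa [toReal2_vec2] using this

theorem exists_unimodular_normalForm {a b c : Fin 2 → ℤ}
    (hind : AffineIndependent ℝ ![toReal2 a, toReal2 b, toReal2 c])
    (hca : latticeLength c a = 1) :
    ∃ (U : Matrix (Fin 2) (Fin 2) ℤ) (w : Fin 2 → ℤ) (s t : ℤ), IsUnit U.det ∧ 0 < s ∧
      U *ᵥ a + w = ![0, 1] ∧ U *ᵥ b + w = ![s, t] ∧ U *ᵥ c + w = 0 := by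
  have hdet : (a - c) 0 * (b - c) 1 - (a - c) 1 * (b - c) 0 ≠ 0 := by
    have := det_sub_ne_zero_of_affineIndependent hind
    simp only [toReal2] at this
    simp only [Pi.sub_apply]
    exact_mod_cast this
  obtain ⟨U, hU, hUa, s, t, hUb, hs⟩ :=
    exists_isUnit_det_mulVec_eq (u := a - c) (w := b - c) hca hdet
  have hφ (z : Fin 2 → ℤ) : U *ᵥ z + -(U *ᵥ c) = U *ᵥ (z - c) := by
    rw [mulVec_sub, sub_eq_add_neg]
  exact ⟨U, -(U *ᵥ c), s, t, hU, hs, by rw [hφ, hUa], by rw [hφ, hUb],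
    by rw [hφ, sub_self, mulVec_zero]⟩

theorem exists_image_convexHull_eq_of_latticeLength_eq (m : ℕ) {a b c : Fin 2 → ℤ}
    (hind : AffineIndependent ℝ ![toReal2 a, toReal2 b, toReal2 c])
    (hint : ∀ p : Fin 2 → ℤ,
      toReal2 p ∉ interior (convexHull ℝ ({toReal2 a, toReal2 b, toReal2 c} : Set (Fin 2 → ℝ))))
    (hab : latticeLength a b = m + 1) (hbc : latticeLength b c = 1)
    (hca : latticeLength c a = 1) :
    ∃ (A : Matrix (Fin 2) (Fin 2) ℤ) (v : Fin 2 → ℤ),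
      (A.det = 1 ∨ A.det = -1) ∧
      affineUnimodularMap A v ''
          convexHull ℝ ({toReal2 a, toReal2 b, toReal2 c} : Set (Fin 2 → ℝ)) =
        convexHull ℝ ({![0, 0], ![(m : ℝ) + 1, 0], ![0, 1]} : Set (Fin 2 → ℝ)) := by
  obtain ⟨U, w, s, t, hU, hs, hφa, hφb, hφc⟩ := exists_unimodular_normalForm hind hca
  have hst : Int.gcd s t = 1 := by
    rw [← hbc, ← latticeLength_mulVec_add w hU, hφb, hφc]
    simp [latticeLength]
  have hst₁ : Int.gcd s (t - 1) = m + 1 := by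
    rw [← hab, ← latticeLength_mulVec_add w hU, hφa, hφb]
    simp [latticeLength]
  have hhollow : ∀ q : Fin 2 → ℤ,
      toReal2 q ∉ interior (convexHull ℝ {![0, 1], ![(s : ℝ), t], 0}) := by
    intro q hq
    rw [show convexHull ℝ {![0, 1], ![(s : ℝ), t], 0} = affineUnimodularMap U w ''
        convexHull ℝ {toReal2 a, toReal2 b, toReal2 c} by
      rw [affineUnimodularMap_image_triangle, hφa, hφb, hφc, toReal2_vec2, toReal2_vec2,
        toReal2_zero]
      norm_num] at hq
    obtain ⟨p, hp⟩ := exists_toReal2_mem_interior_of_mem_interior_image w hU hq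
    exact hint p hp
  obtain ⟨k, hk⟩ := dvd_sub_one_of_forall_not_mem_interior hs hst hhollow
  have hsm : s = m + 1 := by
    rw [hk, Int.gcd_mul_right_right] at hst₁
    omega
  set G : Matrix (Fin 2) (Fin 2) ℤ := !![1, 0; k, -1]
  have hG (z : Fin 2 → ℤ) : (G * U) *ᵥ z + (G *ᵥ w + ![0, 1]) = G *ᵥ (U *ᵥ z + w) + ![0, 1] := by
    rw [← mulVec_mulVec, mulVec_add, add_assoc]
  refine ⟨G * U, G *ᵥ w + ![0, 1], Int.isUnit_iff.mp ?_, ?_⟩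
  · rw [det_mul]
    exact (show IsUnit G.det by simp [G, det_fin_two_of]).mul hU
  · rw [affineUnimodularMap_image_triangle, hG, hG, hG, hφa, hφb, hφc]
    have e₁ : G *ᵥ ![0, 1] + ![0, 1] = ![0, 0] := by ext i; fin_cases i <;> simp [G]
    have e₂ : G *ᵥ ![s, t] + ![0, 1] = ![(m : ℤ) + 1, 0] := by
      ext i; fin_cases i <;> simp [G]
      · exact hsm
      · linear_combination -hk
    have e₃ : G *ᵥ 0 + ![0, 1] = ![0, 1] := by simp
    rw [e₁, e₂, e₃, toReal2_vec2, toReal2_vec2, toReal2_vec2]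
    push_cast
    rfl

theorem multiset_triple_eq_one_one_cases {l₁ l₂ l₃ M : ℕ}
    (h : ({l₁, l₂, l₃} : Multiset ℕ) = {1, 1, M}) :
    (l₁ = M ∧ l₂ = 1 ∧ l₃ = 1) ∨ (l₁ = 1 ∧ l₂ = M ∧ l₃ = 1) ∨ (l₁ = 1 ∧ l₂ = 1 ∧ l₃ = M) := by
  have hmem : ∀ l ∈ ({l₁, l₂, l₃} : Multiset ℕ), l = 1 ∨ l = M := by
    rw [h]; simp
  have hsum := congrArg Multiset.sum h
  simp only [Multiset.insert_eq_cons, Multiset.sum_cons, Multiset.sum_singleton] at hsum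
  rcases hmem l₁ (by simp) with h₁ | h₁ <;> rcases hmem l₂ (by simp) with h₂ | h₂ <;>
    rcases hmem l₃ (by simp) with h₃ | h₃ <;> omega

theorem affineIndependent_rotate {k V P : Type*} [DivisionRing k] [AddCommGroup V] [Module k V]
    [AddTorsor V P] {p q r : P} (h : AffineIndependent k ![p, q, r]) :
    AffineIndependent k ![q, r, p] := by
  rw [affineIndependent_iff_not_collinear_set] at h ⊢
  rwa [Set.pair_comm, Set.insert_comm]

theorem Am_triangle_is_standard_general
    (m : ℕ) (a b c : Fin 2 → ℤ)
    (hind : AffineIndependent ℝ ![toReal2 a, toReal2 b, toReal2 c])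
    (hint : ∀ p : Fin 2 → ℤ,
      toReal2 p ∉ interior (convexHull ℝ ({toReal2 a, toReal2 b, toReal2 c} : Set (Fin 2 → ℝ))))
    (hlen : ({latticeLength a b, latticeLength b c, latticeLength c a} : Multiset ℕ) =
      ({1, 1, m + 1} : Multiset ℕ)) :
    ∃ (A : Matrix (Fin 2) (Fin 2) ℤ) (v : Fin 2 → ℤ),
      (A.det = 1 ∨ A.det = -1) ∧
      affineUnimodularMap A v ''
          convexHull ℝ ({toReal2 a, toReal2 b, toReal2 c} : Set (Fin 2 → ℝ)) =
        convexHull ℝ ({![0, 0], ![(m : ℝ) + 1, 0], ![0, 1]} : Set (Fin 2 → ℝ)) := by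
  have hrot {x y z : Fin 2 → ℝ} : ({y, z, x} : Set (Fin 2 → ℝ)) = {x, y, z} := by
    rw [Set.pair_comm, Set.insert_comm]
  rcases multiset_triple_eq_one_one_cases hlen with ⟨hab, hbc, hca⟩ | ⟨hab, hbc, hca⟩ |
    ⟨hab, hbc, hca⟩
  · exact exists_image_convexHull_eq_of_latticeLength_eq m hind hint hab hbc hca
  · simpa only [hrot] using exists_image_convexHull_eq_of_latticeLength_eq m
      (affineIndependent_rotate hind) (by simpa only [hrot] using hint) hbc hca hab
  · have h := exists_image_convexHull_eq_of_latticeLength_eq m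
      (affineIndependent_rotate (affineIndependent_rotate hind)) (by rwa [hrot, hrot]) hca hab hbc
    rwa [hrot, hrot] at h

/-- An `A_m`-triangle, i.e. a lattice triangle without interior lattice points whose
edges have lattice lengths `1`, `1` and `m+1` in some order, is unimodularly equivalent
to the triangle `conv{(0,0),(m+1,0),(0,1)}`. -/
theorem Am_triangle_is_standard
    (m : ℕ) (hm : 1 ≤ m) (a b c : Fin 2 → ℤ)
    (hind : AffineIndependent ℝ ![toReal2 a, toReal2 b, toReal2 c])
    (hint : ∀ p : Fin 2 → ℤ,
      toReal2 p ∉ interior (convexHull ℝ ({toReal2 a, toReal2 b, toReal2 c} : Set (Fin 2 → ℝ))))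
    (hlen : ({latticeLength a b, latticeLength b c, latticeLength c a} : Multiset ℕ) =
      ({1, 1, m + 1} : Multiset ℕ)) :
    ∃ (A : Matrix (Fin 2) (Fin 2) ℤ) (v : Fin 2 → ℤ),
      (A.det = 1 ∨ A.det = -1) ∧
      affineUnimodularMap A v ''
          convexHull ℝ ({toReal2 a, toReal2 b, toReal2 c} : Set (Fin 2 → ℝ)) =
        convexHull ℝ ({![0, 0], ![(m : ℝ) + 1, 0], ![0, 1]} : Set (Fin 2 → ℝ)) :=
  Am_triangle_is_standard_general m a b c hind hint hlen
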